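/- For any twin cotorsion pair ((S,T),(U,V)) on an extriangulated category B, the heart H̲ = (B^+ ∩ B^-)/W is a preabelian category: every morphism in H̲ has a kernel and a cokernel. -/

import Mathlib

namespace ExtriHearts

open CategoryTheory CategoryTheory.Limits Opposite

attribute [local instance] CategoryTheory.Limits.hasBinaryBiproducts_of_finite_biproducts

universe v u v₂ u₂

section IdealQuotient

variable {D : Type u₂} [Category.{v₂} D] [Preadditive D]

/-- The subgroup of morphisms `X ⟶ Y` generated by those factoring through an object of `W`. -/
def wIdeal (W : Set D) (X Y : D) : AddSubgroup (X ⟶ Y) :=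
  AddSubgroup.closure {f : X ⟶ Y | ∃ Z ∈ W, ∃ p : X ⟶ Z, ∃ q : Z ⟶ Y, f = p ≫ q}

/-- The hom relation on `D` identifying morphisms whose difference lies in the ideal
generated by morphisms factoring through an object of `W`.  (For an additively closed
subcategory `W` this is the usual relation "`f - g` factors through an object of `W`".) -/
def wRel (W : Set D) : HomRel D := fun {X Y} f g => f - g ∈ wIdeal W X Y

lemma comp_left_mem_wIdeal (W : Set D) {X Y Z : D} (f : X ⟶ Y) {g : Y ⟶ Z}
    (hg : g ∈ wIdeal W Y Z) : f ≫ g ∈ wIdeal W X Z := by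
  have hle : wIdeal W Y Z ≤ (wIdeal W X Z).comap (Preadditive.leftComp Z f) := by
    rw [wIdeal, AddSubgroup.closure_le]
    rintro g ⟨Z₀, hZ₀, p, q, rfl⟩
    exact AddSubgroup.subset_closure ⟨Z₀, hZ₀, f ≫ p, q, by
      simp [Preadditive.leftComp]⟩
  simpa [Preadditive.leftComp] using hle hg

lemma comp_right_mem_wIdeal (W : Set D) {X Y Z : D} {f : X ⟶ Y} (g : Y ⟶ Z)
    (hf : f ∈ wIdeal W X Y) : f ≫ g ∈ wIdeal W X Z := by
  have hle : wIdeal W X Y ≤ (wIdeal W X Z).comap (Preadditive.rightComp X g) := by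
    rw [wIdeal, AddSubgroup.closure_le]
    rintro f ⟨Z₀, hZ₀, p, q, rfl⟩
    exact AddSubgroup.subset_closure ⟨Z₀, hZ₀, p, q ≫ g, by
      simp [Preadditive.rightComp]⟩
  simpa [Preadditive.rightComp] using hle hf

instance wRel_congruence (W : Set D) : Congruence (wRel W) where
  equivalence :=
    { refl := fun f => by
        show f - f ∈ wIdeal W _ _
        simp only [sub_self]
        exact zero_mem _
      symm := fun {f g} h => by
        have h' : f - g ∈ wIdeal W _ _ := h
        show g - f ∈ wIdeal W _ _
        simpa only [neg_sub] using neg_mem h'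
      trans := fun {f g h} h₁ h₂ => by
        have h₁' : f - g ∈ wIdeal W _ _ := h₁
        have h₂' : g - h ∈ wIdeal W _ _ := h₂
        show f - h ∈ wIdeal W _ _
        simpa only [sub_add_sub_cancel] using add_mem h₁' h₂' }
  comp_left := fun {X Y Z} f {g g'} h => by
    have h' : g - g' ∈ wIdeal W _ _ := h
    show f ≫ g - f ≫ g' ∈ wIdeal W _ _
    simpa only [← Preadditive.comp_sub] using comp_left_mem_wIdeal W f h'
  comp_right := fun {X Y Z} {f f'} g h => by
    have h' : f - f' ∈ wIdeal W _ _ := h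
    show f ≫ g - f' ≫ g ∈ wIdeal W _ _
    simpa only [← Preadditive.sub_comp] using comp_right_mem_wIdeal W g h'

/-- The quotient of a preadditive category by (the ideal generated by) the morphisms factoring
through a class of objects `W`. -/
abbrev QuotCat (W : Set D) := CategoryTheory.Quotient (wRel W)

/-- The canonical quotient functor. -/
abbrev toQuot (W : Set D) : D ⥤ QuotCat W := Quotient.functor _

instance quotCatPreadditive (W : Set D) : Preadditive (QuotCat W) :=
  Quotient.preadditive _ (fun X Y f₁ f₂ g₁ g₂ h₁ h₂ => by
    have h₁' : f₁ - f₂ ∈ wIdeal W X Y := h₁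
    have h₂' : g₁ - g₂ ∈ wIdeal W X Y := h₂
    show f₁ + g₁ - (f₂ + g₂) ∈ wIdeal W X Y
    have heq : f₁ + g₁ - (f₂ + g₂) = f₁ - f₂ + (g₁ - g₂) := by abel
    rw [heq]
    exact add_mem h₁' h₂')

end IdealQuotient

section ExtCat

/-- The data of an additive `Ab`-valued bifunctor together with a realization predicate:
`realize δ x y` means that the 3-term sequence `A --x--> X --y--> C` realizes the
`E`-extension `δ ∈ E(C,A)`, i.e. belongs to the equivalence class `s(δ)`. -/
structure PreExtStruct (B : Type u) [Category.{v} B] [Preadditive B] where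
  /-- The additive bifunctor `E : Bᵒᵖ × B → Ab`. -/
  E : Bᵒᵖ ⥤ B ⥤ AddCommGrpCat.{v}

namespace PreExtStruct

variable {B : Type u} [Category.{v} B] [Preadditive B]

/-- The abelian group `E(C,A)` of `E`-extensions of `C` by `A`. -/
abbrev Ext (σ : PreExtStruct B) (C A : B) : AddCommGrpCat.{v} := (σ.E.obj (op C)).obj A

/-- `a_* δ`, the pushforward of an `E`-extension along `a : A ⟶ A'`. -/
def push (σ : PreExtStruct B) {C A A' : B} (a : A ⟶ A') (δ : σ.Ext C A) : σ.Ext C A' :=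
  (σ.E.obj (op C)).map a δ

/-- `c^* δ`, the pullback of an `E`-extension along `c : C' ⟶ C`. -/
def pull (σ : PreExtStruct B) {C' C A : B} (c : C' ⟶ C) (δ : σ.Ext C A) : σ.Ext C' A :=
  (σ.E.map c.op).app A δ

/-- The direct sum `δ ⊕ δ'` of two `E`-extensions, i.e. the element of
`E(C ⊞ C', A ⊞ A')` corresponding to `(δ, 0, 0, δ')`. -/
noncomputable def sumExt (σ : PreExtStruct B) [HasBinaryBiproducts B] {C C' A A' : B}
    (δ : σ.Ext C A) (δ' : σ.Ext C' A') : σ.Ext (C ⊞ C') (A ⊞ A') :=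
  σ.push biprod.inl (σ.pull biprod.fst δ) + σ.push biprod.inr (σ.pull biprod.snd δ')

end PreExtStruct

/-- An *extriangulated category* structure `(E, s)` on an additive category `B`, consisting of
an additive bifunctor `E : Bᵒᵖ × B → Ab` and an additive realization `s` of `E` (encoded by the
predicate `realize`), subject to the axioms (ET1), (ET2), (ET3), (ET3)ᵒᵖ, (ET4), (ET4)ᵒᵖ of
Nakaoka–Palu. -/
structure ExtStruct (B : Type u) [Category.{v} B] [Preadditive B] [HasFiniteBiproducts B]
    extends PreExtStruct B where
  /-- (ET1) `E` is additive in the second variable. -/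
  additive_fst : ∀ Cop : Bᵒᵖ, (E.obj Cop).Additive
  /-- (ET1) `E` is additive in the first variable. -/
  additive_snd : ∀ A : B, (E.flip.obj A).Additive
  /-- `realize δ x y` means the sequence `A --x--> X --y--> C` realizes `δ`, i.e. it belongs to
  the equivalence class `s(δ)`. -/
  realize : ∀ ⦃A C : B⦄, toPreExtStruct.Ext C A → ∀ ⦃X : B⦄, (A ⟶ X) → (X ⟶ C) → Prop
  /-- Every `E`-extension is realized by some sequence. -/
  realize_ex : ∀ ⦃A C : B⦄ (δ : toPreExtStruct.Ext C A),
      ∃ (X : B) (x : A ⟶ X) (y : X ⟶ C), realize δ x y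
  /-- `s(δ)` is closed under the equivalence of sequences. -/
  realize_iso : ∀ ⦃A C X X' : B⦄ (δ : toPreExtStruct.Ext C A) (x : A ⟶ X) (y : X ⟶ C)
      (b : X ≅ X'), realize δ x y → realize δ (x ≫ b.hom) (b.inv ≫ y)
  /-- Any two realizations of `δ` are equivalent sequences. -/
  realize_unique : ∀ ⦃A C X X' : B⦄ (δ : toPreExtStruct.Ext C A) (x : A ⟶ X) (y : X ⟶ C)
      (x' : A ⟶ X') (y' : X' ⟶ C), realize δ x y → realize δ x' y' →
      ∃ b : X ≅ X', x ≫ b.hom = x' ∧ b.hom ≫ y' = y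
  /-- (ET2)(∗) Any morphism of `E`-extensions is realized by a morphism of sequences. -/
  realize_map : ∀ ⦃A C A' C' X X' : B⦄ (δ : toPreExtStruct.Ext C A) (δ' : toPreExtStruct.Ext C' A')
      (x : A ⟶ X) (y : X ⟶ C) (x' : A' ⟶ X') (y' : X' ⟶ C') (a : A ⟶ A') (c : C ⟶ C'),
      realize δ x y → realize δ' x' y' →
      toPreExtStruct.push a δ = toPreExtStruct.pull c δ' →
      ∃ b : X ⟶ X', x ≫ b = a ≫ x' ∧ y ≫ c = b ≫ y'
  /-- (ET2)(i) The split extension is realized by the split sequence. -/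
  realize_zero : ∀ A C : B,
      realize (0 : toPreExtStruct.Ext C A) (biprod.inl : A ⟶ A ⊞ C) (biprod.snd : A ⊞ C ⟶ C)
  /-- (ET2)(ii) Realization is additive. -/
  realize_sum : ∀ ⦃A C A' C' X X' : B⦄ (δ : toPreExtStruct.Ext C A)
      (δ' : toPreExtStruct.Ext C' A') (x : A ⟶ X) (y : X ⟶ C) (x' : A' ⟶ X') (y' : X' ⟶ C'),
      realize δ x y → realize δ' x' y' →
      realize (toPreExtStruct.sumExt δ δ') (biprod.map x x') (biprod.map y y')
  /-- (ET3) -/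
  et3 : ∀ ⦃A C A' C' X X' : B⦄ (δ : toPreExtStruct.Ext C A) (δ' : toPreExtStruct.Ext C' A')
      (x : A ⟶ X) (y : X ⟶ C) (x' : A' ⟶ X') (y' : X' ⟶ C'),
      realize δ x y → realize δ' x' y' → ∀ (a : A ⟶ A') (b : X ⟶ X'), x ≫ b = a ≫ x' →
      ∃ c : C ⟶ C', toPreExtStruct.push a δ = toPreExtStruct.pull c δ' ∧ y ≫ c = b ≫ y'
  /-- (ET3)ᵒᵖ -/
  et3op : ∀ ⦃A C A' C' X X' : B⦄ (δ : toPreExtStruct.Ext C A) (δ' : toPreExtStruct.Ext C' A')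
      (x : A ⟶ X) (y : X ⟶ C) (x' : A' ⟶ X') (y' : X' ⟶ C'),
      realize δ x y → realize δ' x' y' → ∀ (b : X ⟶ X') (c : C ⟶ C'), y ≫ c = b ≫ y' →
      ∃ a : A ⟶ A', toPreExtStruct.push a δ = toPreExtStruct.pull c δ' ∧ x ≫ b = a ≫ x'
  /-- (ET4) -/
  et4 : ∀ ⦃A B₀ D C F : B⦄ (δ : toPreExtStruct.Ext D A) (f : A ⟶ B₀) (f' : B₀ ⟶ D)
      (δ' : toPreExtStruct.Ext F B₀) (g : B₀ ⟶ C) (g' : C ⟶ F),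
      realize δ f f' → realize δ' g g' →
      ∃ (E₀ : B) (d : D ⟶ E₀) (e : E₀ ⟶ F) (h' : C ⟶ E₀) (δ'' : toPreExtStruct.Ext E₀ A),
        g ≫ h' = f' ≫ d ∧ h' ≫ e = g' ∧
        realize δ'' (f ≫ g) h' ∧ realize (toPreExtStruct.push f' δ') d e ∧
        toPreExtStruct.pull d δ'' = δ ∧ toPreExtStruct.push f δ'' = toPreExtStruct.pull e δ'
  /-- (ET4)ᵒᵖ -/
  et4op : ∀ ⦃F C B₀ D A : B⦄ (δ' : toPreExtStruct.Ext B₀ F) (s : F ⟶ C) (t : C ⟶ B₀)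
      (δ : toPreExtStruct.Ext A D) (u : D ⟶ B₀) (v : B₀ ⟶ A),
      realize δ' s t → realize δ u v →
      ∃ (E₀ : B) (e : F ⟶ E₀) (d : E₀ ⟶ D) (m : E₀ ⟶ C) (δ'' : toPreExtStruct.Ext A E₀),
        m ≫ t = d ≫ u ∧ e ≫ m = s ∧
        realize δ'' m (t ≫ v) ∧ realize (toPreExtStruct.pull u δ') e d ∧
        toPreExtStruct.push d δ'' = δ ∧
        toPreExtStruct.pull v δ'' = toPreExtStruct.push e δ'

namespace ExtStruct

variable {B : Type u} [Category.{v} B] [Preadditive B] [HasFiniteBiproducts B] (σ : ExtStruct B)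

/-- A sequence `A --x--> X --y--> C` is a conflation if it realizes some `E`-extension. -/
def Conflation {A X C : B} (x : A ⟶ X) (y : X ⟶ C) : Prop :=
  ∃ δ : σ.Ext C A, σ.realize δ x y

/-- `Cone(D₁, D₂)`: objects `X` admitting a conflation `D₁ ↣ D₂ ↠ X`. -/
def Cone (D₁ D₂ : Set B) : Set B :=
  {X | ∃ (A Y : B) (f : A ⟶ Y) (g : Y ⟶ X), A ∈ D₁ ∧ Y ∈ D₂ ∧ σ.Conflation f g}

/-- `CoCone(D₁, D₂)`: objects `X` admitting a conflation `X ↣ D₁ ↠ D₂`. -/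
def CoCone (D₁ D₂ : Set B) : Set B :=
  {X | ∃ (Y C : B) (f : X ⟶ Y) (g : Y ⟶ C), Y ∈ D₁ ∧ C ∈ D₂ ∧ σ.Conflation f g}

/-- `D₁ ∗ D₂`: objects `X` admitting a conflation `D₁ ↣ X ↠ D₂`. -/
def star (D₁ D₂ : Set B) : Set B :=
  {X | ∃ (A C : B) (f : A ⟶ X) (g : X ⟶ C), A ∈ D₁ ∧ C ∈ D₂ ∧ σ.Conflation f g}

/-- `add(D₁ ∗ D₂)`: direct summands of objects of `D₁ ∗ D₂`. -/
def addStar (D₁ D₂ : Set B) : Set B :=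
  {X | ∃ Y ∈ σ.star D₁ D₂, ∃ (s : X ⟶ Y) (r : Y ⟶ X), s ≫ r = 𝟙 X}

/-- An object `P` is projective if `E(P, −) = 0`. -/
def IsProj (P : B) : Prop := ∀ (A : B) (δ : σ.Ext P A), δ = 0

/-- An object `I` is injective if `E(−, I) = 0`. -/
def IsInj (I : B) : Prop := ∀ (C : B) (δ : σ.Ext C I), δ = 0

/-- The class of projective objects. -/
def projs : Set B := {P | σ.IsProj P}

/-- `B` has enough projectives: every object admits a deflation from a projective. -/
def EnoughProj : Prop :=
  ∀ X : B, ∃ (P K : B) (i : K ⟶ P) (p : P ⟶ X), σ.IsProj P ∧ σ.Conflation i p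

/-- `B` has enough injectives: every object admits an inflation into an injective. -/
def EnoughInj : Prop :=
  ∀ X : B, ∃ (I C : B) (i : X ⟶ I) (p : I ⟶ C), σ.IsInj I ∧ σ.Conflation i p

end ExtStruct

/-- A full additive subcategory (given as a class of objects), closed under isomorphisms and
direct summands. -/
structure AddClosed {B : Type u} [Category.{v} B] [Preadditive B] [HasFiniteBiproducts B]
    (U : Set B) : Prop where
  zero_mem : ∀ Z : B, IsZero Z → Z ∈ U
  biprod_mem : ∀ X Y : B, X ∈ U → Y ∈ U → (X ⊞ Y) ∈ U
  summand_mem : ∀ X Y : B, Y ∈ U → ∀ (s : X ⟶ Y) (r : Y ⟶ X), s ≫ r = 𝟙 X → X ∈ U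

namespace ExtStruct

variable {B : Type u} [Category.{v} B] [Preadditive B] [HasFiniteBiproducts B] (σ : ExtStruct B)

/-- A (complete) cotorsion pair `(U, V)` on an extriangulated category. -/
structure IsCotorsionPair (U V : Set B) : Prop where
  addU : AddClosed U
  addV : AddClosed V
  ext_vanish : ∀ ⦃X : B⦄, X ∈ U → ∀ ⦃Y : B⦄, Y ∈ V → ∀ δ : σ.Ext X Y, δ = 0
  resolve : ∀ X : B, ∃ (V₀ U₀ : B) (f : V₀ ⟶ U₀) (g : U₀ ⟶ X),
      V₀ ∈ V ∧ U₀ ∈ U ∧ σ.Conflation f g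
  coresolve : ∀ X : B, ∃ (V₀ U₀ : B) (f : X ⟶ V₀) (g : V₀ ⟶ U₀),
      V₀ ∈ V ∧ U₀ ∈ U ∧ σ.Conflation f g

/-- A twin cotorsion pair `((S,T), (U,V))`. -/
structure IsTwinCotorsionPair (S T U V : Set B) : Prop where
  fst : σ.IsCotorsionPair S T
  snd : σ.IsCotorsionPair U V
  ext_SV : ∀ ⦃X : B⦄, X ∈ S → ∀ ⦃Y : B⦄, Y ∈ V → ∀ δ : σ.Ext X Y, δ = 0

section Twin

variable (S T U V : Set B)

/-- `B⁺ = Cone(V, W)` for the core `W = T ∩ U` of a twin cotorsion pair. -/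
def tPos : Set B := σ.Cone V (T ∩ U)

/-- `B⁻ = CoCone(W, S)` for the core `W = T ∩ U` of a twin cotorsion pair. -/
def tNeg : Set B := σ.CoCone (T ∩ U) S

/-- The class of objects of the heart `H = B⁺ ∩ B⁻` of a twin cotorsion pair. -/
def tHeartSet : Set B := σ.tPos T U V ∩ σ.tNeg S T U

/-- The heart `H/W` of a twin cotorsion pair, as a full subcategory of the quotient
category `B/W`. -/
abbrev THeart := ObjectProperty.FullSubcategory (fun X : QuotCat (T ∩ U : Set B) => X.as ∈ σ.tHeartSet S T U V)


/-- A *reflection sequence* for `B₀`: a conflation `B₀ ↣ Z ↠ S₀` with `Z ∈ B⁺`, `S₀ ∈ S`,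
such that `z^* : E(Z, V₀) → E(B₀, V₀)` is surjective for every `V₀ ∈ V`. -/
def IsReflectionSeq {B₀ Z S₀ : B} (z : B₀ ⟶ Z) (w : Z ⟶ S₀) : Prop :=
  Z ∈ σ.tPos T U V ∧ S₀ ∈ S ∧ σ.Conflation z w ∧
    ∀ ⦃V₀ : B⦄, V₀ ∈ V → Function.Surjective (fun δ : σ.Ext Z V₀ => σ.pull z δ)

/-- A *coreflection sequence* for `B₀`: a conflation `V₀ ↣ X ↠ B₀` with `X ∈ B⁻`, `V₀ ∈ V`,
such that `x_* : E(S₀, X) → E(S₀, B₀)` is surjective for every `S₀ ∈ S`. -/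
def IsCoreflectionSeq {V₀ X B₀ : B} (v : V₀ ⟶ X) (x : X ⟶ B₀) : Prop :=
  X ∈ σ.tNeg S T U ∧ V₀ ∈ V ∧ σ.Conflation v x ∧
    ∀ ⦃S₀ : B⦄, S₀ ∈ S → Function.Surjective (fun δ : σ.Ext S₀ X => σ.push x δ)

end Twin

section Single

variable (U V : Set B)

/-- `B⁺` for a single cotorsion pair `(U,V)`, with core `W = U ∩ V`. -/
def sPos : Set B := σ.Cone V (U ∩ V)

/-- `B⁻` for a single cotorsion pair `(U,V)`, with core `W = U ∩ V`. -/
def sNeg : Set B := σ.CoCone (U ∩ V) U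

/-- The class of objects of the heart of a single cotorsion pair. -/
def sHeartSet : Set B := σ.sPos U V ∩ σ.sNeg U V

/-- The heart `H/W` of a cotorsion pair `(U,V)`, a full subcategory of `B/W`, `W = U ∩ V`. -/
abbrev SHeart := ObjectProperty.FullSubcategory (fun X : QuotCat (U ∩ V : Set B) => X.as ∈ σ.sHeartSet U V)

/-- The inclusion of the heart into the quotient category `B/W`. -/
abbrev sHeartIncl : σ.SHeart U V ⥤ QuotCat (U ∩ V : Set B) := ObjectProperty.ι _

/-- The kernel `K = add(U ∗ V)` of a cotorsion pair. -/
def kernelSet : Set B := σ.addStar U V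

/-- The coheart `C = ⊥₁K` of a cotorsion pair. -/
def coheart : Set B := {X | ∀ ⦃K : B⦄, K ∈ σ.kernelSet U V → ∀ δ : σ.Ext X K, δ = 0}


/-- An object of the heart determined by an object of `B` lying in `B⁺ ∩ B⁻`. -/
def sHeartObj {X : B} (hX : X ∈ σ.sHeartSet U V) : σ.SHeart U V :=
  ⟨(toQuot (U ∩ V : Set B)).obj X, hX⟩

/-- The image in the heart of a morphism of `B` between objects of `B⁺ ∩ B⁻`. -/
def sHeartHom {X Y : B} (hX : X ∈ σ.sHeartSet U V) (hY : Y ∈ σ.sHeartSet U V) (f : X ⟶ Y) :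
    σ.sHeartObj U V hX ⟶ σ.sHeartObj U V hY :=
  ⟨(toQuot (U ∩ V : Set B)).map f⟩

end Single

end ExtStruct

end ExtCat

section More

variable {B : Type u} [Category.{v} B] [Preadditive B] [HasFiniteBiproducts B]

namespace ExtStruct

variable (σ : ExtStruct B)

/-- `Ω D₀ = CoCone(P, D₀)`, the syzygy class of a class of objects `D₀`. -/
def omegaSet (D₀ : Set B) : Set B := σ.CoCone σ.projs D₀

/-- A choice of iterated syzygies of `X`: `Z 0 = X` and for each `i` there is a conflation
`Z (i+1) ↣ P ↠ Z i` with `P` projective. -/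
def SyzygyChain (X : B) (Z : ℕ → B) : Prop :=
  Z 0 = X ∧ ∀ i : ℕ, ∃ (P : B) (f : Z (i + 1) ⟶ P) (g : P ⟶ Z i),
    σ.IsProj P ∧ σ.Conflation f g

/-- A choice of iterated cosyzygies of `Y`: `Z 0 = Y` and for each `i` there is a conflation
`Z i ↣ I ↠ Z (i+1)` with `I` injective. -/
def CosyzygyChain (Y : B) (Z : ℕ → B) : Prop :=
  Z 0 = Y ∧ ∀ i : ℕ, ∃ (I : B) (f : Z i ⟶ I) (g : I ⟶ Z (i + 1)),
    σ.IsInj I ∧ σ.Conflation f g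

/-- Vanishing of the higher extension group `E^{i+1}(X, Y) = E(X, Σ^i Y)`, expressed via
cosyzygy chains.  (`hExtVanish σ X Y 0` is the vanishing of `E(X,Y)` itself.) -/
def hExtVanish (X Y : B) (i : ℕ) : Prop :=
  ∀ Z : ℕ → B, σ.CosyzygyChain Y Z → ∀ δ : σ.Ext X (Z i), δ = 0

/-- `Σ^j D₀`: the class of `j`-th cosyzygies of objects of `D₀`. -/
def sigmaSet (j : ℕ) (D₀ : Set B) : Set B :=
  {X | ∃ Y ∈ D₀, ∃ Z : ℕ → B, σ.CosyzygyChain Y Z ∧ Z j = X}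

/-- An `n`-cluster tilting subcategory of an extriangulated category:
it is functorially finite, and `X ∈ M` iff `E^i(X, M) = 0` for `1 ≤ i ≤ n - 1`,
iff `E^i(M, X) = 0` for `1 ≤ i ≤ n - 1`. -/
structure IsNClusterTilting (n : ℕ) (M : Set B) : Prop where
  contravariantly_finite : ∀ X : B, ∃ M₀ ∈ M, ∃ f : M₀ ⟶ X,
      ∀ M₁ ∈ M, ∀ g : M₁ ⟶ X, ∃ h : M₁ ⟶ M₀, h ≫ f = g
  covariantly_finite : ∀ X : B, ∃ M₀ ∈ M, ∃ f : X ⟶ M₀,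
      ∀ M₁ ∈ M, ∀ g : X ⟶ M₁, ∃ h : M₀ ⟶ M₁, f ≫ h = g
  mem_iff_vanish_left : ∀ X : B,
      X ∈ M ↔ ∀ i : ℕ, i ≤ n - 2 → ∀ Y ∈ M, σ.hExtVanish X Y i
  mem_iff_vanish_right : ∀ X : B,
      X ∈ M ↔ ∀ i : ℕ, i ≤ n - 2 → ∀ Y ∈ M, σ.hExtVanish Y X i

/-- `mlev σ M k` is the subcategory `M_{k+1}` of the paper: `M_1 = M` and
`M_{ℓ} = Cone(M_{ℓ-1}, M)`. -/
def mlev (M : Set B) : ℕ → Set B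
  | 0 => M
  | (k + 1) => σ.Cone (mlev M k) M

end ExtStruct

section Reflectors

variable (W P N : Set B)

/-- The data of a reflection functor `σ⁺` onto the objects of `B⁺` (given by the class `P`),
i.e. a left adjoint of the inclusion of the full subcategory of `B/W` on `P` in the bijection
formulation: composing with the unit `B → σ⁺B` gives bijections
`(σ⁺X ⟶ Y) ≃ (X ⟶ Y)` for all `Y` lying in `P`. -/
structure ReflectorData where
  σp : QuotCat W ⥤ QuotCat W
  mem : ∀ X : QuotCat W, (σp.obj X).as ∈ P
  unit : 𝟭 (QuotCat W) ⟶ σp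
  bij : ∀ (X Y : QuotCat W), Y.as ∈ P →
      Function.Bijective (fun g : (σp.obj X ⟶ Y) => unit.app X ≫ g)

/-- The data of a coreflection functor `σ⁻` onto the objects of `B⁻` (given by the class `N`). -/
structure CoreflectorData where
  σm : QuotCat W ⥤ QuotCat W
  mem : ∀ X : QuotCat W, (σm.obj X).as ∈ N
  counit : σm ⟶ 𝟭 (QuotCat W)
  bij : ∀ (X Y : QuotCat W), X.as ∈ N →
      Function.Bijective (fun g : (X ⟶ σm.obj Y) => g ≫ counit.app Y)

end Reflectors

namespace ExtStruct

variable (σ : ExtStruct B)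

/-- The data of the cohomological functor `H = σ⁻ ∘ σ⁺ ∘ π : B → H` associated to a cotorsion
pair `(U, V)`: reflection and coreflection functors together with a functor `H` to the heart
which is isomorphic to `σ⁻ ∘ σ⁺ ∘ π` after composition with the inclusion of the heart. -/
structure HeartFunctorData (U V : Set B) where
  refl : ReflectorData (B := B) (U ∩ V) (σ.sPos U V)
  corefl : CoreflectorData (B := B) (U ∩ V) (σ.sNeg U V)
  H : B ⥤ σ.SHeart U V
  iso : (H ⋙ σ.sHeartIncl U V) ≅ (toQuot (U ∩ V : Set B) ⋙ refl.σp ⋙ corefl.σm)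

end ExtStruct

section Mod

variable (D : Type u₂) [Category.{v₂} D] [Preadditive D]

/-- A coherent (finitely presented) functor `Dᵒᵖ ⥤ Ab`: one admitting an exact presentation
`Hom(−,X) → Hom(−,Y) → F → 0`. -/
def IsCoherent (F : Dᵒᵖ ⥤ AddCommGrpCat.{v₂}) : Prop :=
  ∃ (X Y : D) (f : X ⟶ Y) (η : preadditiveYoneda.obj Y ⟶ F),
    (∀ A : D, Function.Surjective (η.app (op A))) ∧
    (∀ (A : D) (g : A ⟶ Y), η.app (op A) g = 0 ↔ ∃ h : A ⟶ X, h ≫ f = g)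

/-- `mod D`: the category of coherent functors `Dᵒᵖ ⥤ Ab`. -/
abbrev ModCat := ObjectProperty.FullSubcategory (fun F : Dᵒᵖ ⥤ AddCommGrpCat.{v₂} => IsCoherent D F)

end Mod

/-- The additive quotient `C/P` of the full subcategory of `B` on a class `C₀` of objects by
(the ideal of) morphisms factoring through objects satisfying `P₀`. -/
abbrev StableCat (C₀ P₀ : Set B) :=
  QuotCat (D := ObjectProperty.FullSubcategory (fun X : B => X ∈ C₀)) {Z | Z.obj ∈ P₀}

end More

/-!
For `f : B₁ ⟶ B₂` in `B⁺ ∩ B⁻`, push a conflation `B₁ ↣ W₀ ↠ S₀` (`W₀ ∈ W`, `S₀ ∈ S`) out along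
`f` to get `B₂ ↣ M ↠ S₀`, then reflect `M` into `B⁺` by a conflation `M ↣ Z ↠ S₁` with `Z ∈ B⁺`,
`S₁ ∈ S`, whose inflation induces surjections on `E(-, V)`. Since `B⁻` is closed under extensions
by `S`, both `M` and `Z` stay in `B⁻`, and `B₂ → M → Z` is a cokernel of `f` modulo `W`: a
morphism killing `f` modulo `W` extends over the homotopy pushout `B₁ ↣ B₂ ⊞ W₀ ↠ M` and then over
the reflection, and it does so uniquely modulo `W` because `E(S, V) = 0` makes every morphism from
`S` to `B⁺` factor through `W`, so that inflations with cone in `S` are epimorphisms onto `B⁺`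
modulo `W`. Kernels are dual, using pullbacks and coreflections into `B⁻`.
-/

lemma isIso_of_isIso_comp_of_isIso_comp {D : Type u₂} [Category.{v₂} D] {P Q : D}
    (f : P ⟶ Q) (g : Q ⟶ P) [IsIso (f ≫ g)] [IsIso (g ≫ f)] : IsIso f :=
  have : IsSplitMono f :=
    IsSplitMono.mk' ⟨g ≫ inv (f ≫ g), by rw [← Category.assoc, IsIso.hom_inv_id]⟩
  have : Epi f := epi_of_epi g f
  isIso_of_epi_of_isSplitMono f

section Generalities

open ZeroObject

variable {D : Type u₂} [Category.{v₂} D] [Preadditive D]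

lemma comp_mem_wIdeal {W : Set D} {X Y Z : D} (hZ : Z ∈ W) (p : X ⟶ Z) (q : Z ⟶ Y) :
    p ≫ q ∈ wIdeal W X Y :=
  AddSubgroup.subset_closure ⟨Z, hZ, p, q, rfl⟩

lemma mem_wIdeal_iff_of_addClosed [HasFiniteBiproducts D] {W : Set D} (hW : AddClosed W)
    {X Y : D} (f : X ⟶ Y) :
    f ∈ wIdeal W X Y ↔ ∃ Z ∈ W, ∃ p : X ⟶ Z, ∃ q : Z ⟶ Y, f = p ≫ q := by
  refine ⟨fun hf => ?_, fun ⟨Z, hZ, p, q, hf⟩ => hf ▸ comp_mem_wIdeal hZ p q⟩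
  induction hf using AddSubgroup.closure_induction with
  | mem g hg => exact hg
  | zero => exact ⟨0, hW.zero_mem _ (isZero_zero D), 0, 0, by simp⟩
  | add g₁ g₂ _ _ h₁ h₂ =>
    obtain ⟨Z₁, hZ₁, p₁, q₁, rfl⟩ := h₁
    obtain ⟨Z₂, hZ₂, p₂, q₂, rfl⟩ := h₂
    exact ⟨Z₁ ⊞ Z₂, hW.biprod_mem _ _ hZ₁ hZ₂, biprod.lift p₁ p₂, biprod.desc q₁ q₂, by simp⟩
  | neg g _ h =>
    obtain ⟨Z, hZ, p, q, rfl⟩ := h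
    exact ⟨Z, hZ, -p, q, by simp⟩

lemma toQuot_map_eq_iff (W : Set D) {X Y : D} (f g : X ⟶ Y) :
    (toQuot W).map f = (toQuot W).map g ↔ f - g ∈ wIdeal W X Y :=
  Quotient.functor_map_eq_iff _ _ _

lemma toQuot_map_eq_zero_iff (W : Set D) {X Y : D} (f : X ⟶ Y) :
    (toQuot W).map f = 0 ↔ f ∈ wIdeal W X Y := by
  have : (0 : (toQuot W).obj X ⟶ (toQuot W).obj Y) = (toQuot W).map 0 := rfl
  rw [this, toQuot_map_eq_iff, sub_zero]

abbrev QuotSub (W H : Set D) := ObjectProperty.FullSubcategory (fun X : QuotCat W => X.as ∈ H)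

variable {W H : Set D}

def quotSubHom {X Y : QuotSub W H} (f : X.obj.as ⟶ Y.obj.as) : X ⟶ Y :=
  ObjectProperty.homMk ((toQuot W).map f)

lemma quotSubHom_surjective {X Y : QuotSub W H} :
    Function.Surjective (quotSubHom : (X.obj.as ⟶ Y.obj.as) → (X ⟶ Y)) := fun f => by
  obtain ⟨f₀, hf₀⟩ := (toQuot W).map_surjective f.hom
  exact ⟨f₀, ObjectProperty.hom_ext _ hf₀⟩

lemma quotSubHom_comp {X Y Z : QuotSub W H} (f : X.obj.as ⟶ Y.obj.as) (g : Y.obj.as ⟶ Z.obj.as) :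
    quotSubHom (f ≫ g) = quotSubHom f ≫ quotSubHom g :=
  ObjectProperty.hom_ext _ ((toQuot W).map_comp f g)

lemma quotSubHom_eq_iff {X Y : QuotSub W H} (f g : X.obj.as ⟶ Y.obj.as) :
    quotSubHom f = quotSubHom g ↔ f - g ∈ wIdeal W _ _ := by
  rw [← toQuot_map_eq_iff]
  exact ⟨congrArg InducedCategory.Hom.hom, ObjectProperty.hom_ext _⟩

lemma quotSubHom_eq_zero_iff {X Y : QuotSub W H} (f : X.obj.as ⟶ Y.obj.as) :
    quotSubHom f = 0 ↔ f ∈ wIdeal W _ _ := by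
  rw [← toQuot_map_eq_zero_iff]
  exact ⟨congrArg InducedCategory.Hom.hom, ObjectProperty.hom_ext _⟩

variable (W H)

structure IsKernelModulo {K B₁ B₂ : D} (f : B₁ ⟶ B₂) (k : K ⟶ B₁) : Prop where
  comp_mem : k ≫ f ∈ wIdeal W K B₂
  exists_lift : ∀ ⦃Y : D⦄, Y ∈ H → ∀ g : Y ⟶ B₁, g ≫ f ∈ wIdeal W Y B₂ →
    ∃ φ : Y ⟶ K, g - φ ≫ k ∈ wIdeal W Y B₁
  mem_of_comp_mem : ∀ ⦃Y : D⦄, Y ∈ H → ∀ ψ : Y ⟶ K, ψ ≫ k ∈ wIdeal W Y B₁ → ψ ∈ wIdeal W Y K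

structure IsCokernelModulo {B₁ B₂ C : D} (f : B₁ ⟶ B₂) (c : B₂ ⟶ C) : Prop where
  comp_mem : f ≫ c ∈ wIdeal W B₁ C
  exists_desc : ∀ ⦃Y : D⦄, Y ∈ H → ∀ g : B₂ ⟶ Y, f ≫ g ∈ wIdeal W B₁ Y →
    ∃ φ : C ⟶ Y, g - c ≫ φ ∈ wIdeal W B₂ Y
  mem_of_comp_mem : ∀ ⦃Y : D⦄, Y ∈ H → ∀ ψ : C ⟶ Y, c ≫ ψ ∈ wIdeal W B₂ Y → ψ ∈ wIdeal W C Y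

lemma hasKernels_quotSub (h : ∀ ⦃B₁ B₂ : D⦄, B₁ ∈ H → B₂ ∈ H → ∀ f : B₁ ⟶ B₂,
    ∃ K ∈ H, ∃ k : K ⟶ B₁, IsKernelModulo W H f k) :
    HasKernels (QuotSub W H) where
  has_limit {X Y} f := by
    obtain ⟨f₀, rfl⟩ := quotSubHom_surjective f
    obtain ⟨K, hK, k, hk⟩ := h X.property Y.property f₀
    let K' : QuotSub W H := ⟨⟨K⟩, hK⟩
    let ι : K' ⟶ X := quotSubHom k
    have hι : ι ≫ quotSubHom f₀ = 0 := by
      rw [← quotSubHom_comp, quotSubHom_eq_zero_iff]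
      exact hk.comp_mem
    have : Mono ι := Preadditive.mono_of_cancel_zero _ fun {Q} m hm => by
      obtain ⟨m₀, rfl⟩ := quotSubHom_surjective m
      rw [← quotSubHom_comp, quotSubHom_eq_zero_iff] at hm
      exact (quotSubHom_eq_zero_iff _).2 (hk.mem_of_comp_mem Q.property m₀ hm)
    have hlift : ∀ {Q : QuotSub W H} (t : Q ⟶ X), t ≫ quotSubHom f₀ = 0 →
        ∃ l : Q ⟶ K', l ≫ ι = t := fun {Q} t ht => by
      obtain ⟨t₀, rfl⟩ := quotSubHom_surjective t
      rw [← quotSubHom_comp, quotSubHom_eq_zero_iff] at ht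
      obtain ⟨φ, hφ⟩ := hk.exists_lift Q.property t₀ ht
      refine ⟨quotSubHom φ, ?_⟩
      rw [← quotSubHom_comp, quotSubHom_eq_iff, ← neg_sub]
      exact neg_mem hφ
    exact HasLimit.mk ⟨_, KernelFork.IsLimit.ofι' ι hι fun t ht =>
      ⟨(hlift t ht).choose, (hlift t ht).choose_spec⟩⟩

lemma hasCokernels_quotSub (h : ∀ ⦃B₁ B₂ : D⦄, B₁ ∈ H → B₂ ∈ H → ∀ f : B₁ ⟶ B₂,
    ∃ C ∈ H, ∃ c : B₂ ⟶ C, IsCokernelModulo W H f c) :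
    HasCokernels (QuotSub W H) where
  has_colimit {X Y} f := by
    obtain ⟨f₀, rfl⟩ := quotSubHom_surjective f
    obtain ⟨C, hC, c, hc⟩ := h X.property Y.property f₀
    let C' : QuotSub W H := ⟨⟨C⟩, hC⟩
    let π : Y ⟶ C' := quotSubHom c
    have hπ : quotSubHom f₀ ≫ π = 0 := by
      rw [← quotSubHom_comp, quotSubHom_eq_zero_iff]
      exact hc.comp_mem
    have : Epi π := Preadditive.epi_of_cancel_zero _ fun {Q} m hm => by
      obtain ⟨m₀, rfl⟩ := quotSubHom_surjective m
      rw [← quotSubHom_comp, quotSubHom_eq_zero_iff] at hm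
      exact (quotSubHom_eq_zero_iff _).2 (hc.mem_of_comp_mem Q.property m₀ hm)
    have hdesc : ∀ {Q : QuotSub W H} (t : Y ⟶ Q), quotSubHom f₀ ≫ t = 0 →
        ∃ l : C' ⟶ Q, π ≫ l = t := fun {Q} t ht => by
      obtain ⟨t₀, rfl⟩ := quotSubHom_surjective t
      rw [← quotSubHom_comp, quotSubHom_eq_zero_iff] at ht
      obtain ⟨φ, hφ⟩ := hc.exists_desc Q.property t₀ ht
      refine ⟨quotSubHom φ, ?_⟩
      rw [← quotSubHom_comp, quotSubHom_eq_iff, ← neg_sub]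
      exact neg_mem hφ
    exact HasColimit.mk ⟨_, CokernelCofork.IsColimit.ofπ' π hπ fun t ht =>
      ⟨(hdesc t ht).choose, (hdesc t ht).choose_spec⟩⟩

@[simps]
noncomputable def biprodShear [HasBinaryBiproducts D] {P Q : D} (f : Q ⟶ P) : P ⊞ Q ≅ P ⊞ Q where
  hom := biprod.desc biprod.inl (biprod.lift f (𝟙 Q))
  inv := biprod.desc biprod.inl (biprod.lift (-f) (𝟙 Q))

end Generalities

namespace ExtStruct

open ZeroObject

variable {B : Type u} [Category.{v} B] [Preadditive B] [HasFiniteBiproducts B] {σ : ExtStruct B}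

section Functoriality

variable (σ)

lemma push_push {C A A' A'' : B} (f : A ⟶ A') (g : A' ⟶ A'') (δ : σ.Ext C A) :
    σ.push g (σ.push f δ) = σ.push (f ≫ g) δ := by
  simp [PreExtStruct.push]

lemma pull_pull {C'' C' C A : B} (f : C'' ⟶ C') (g : C' ⟶ C) (δ : σ.Ext C A) :
    σ.pull f (σ.pull g δ) = σ.pull (f ≫ g) δ := by
  simp [PreExtStruct.pull]

@[simp] lemma push_id {C A : B} (δ : σ.Ext C A) : σ.push (𝟙 A) δ = δ := by
  simp [PreExtStruct.push]

@[simp] lemma pull_id {C A : B} (δ : σ.Ext C A) : σ.pull (𝟙 C) δ = δ := by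
  simp [PreExtStruct.pull]

lemma push_pull {C' C A A' : B} (a : A ⟶ A') (c : C' ⟶ C) (δ : σ.Ext C A) :
    σ.push a (σ.pull c δ) = σ.pull c (σ.push a δ) :=
  (ConcreteCategory.congr_hom ((σ.E.map c.op).naturality a) δ).symm

@[simp] lemma push_zero {C A A' : B} (f : A ⟶ A') : σ.push f (0 : σ.Ext C A) = 0 :=
  map_zero _

@[simp] lemma pull_zero {C' C A : B} (c : C' ⟶ C) : σ.pull c (0 : σ.Ext C A) = 0 :=
  map_zero _

lemma push_neg {C A A' : B} (f : A ⟶ A') (δ : σ.Ext C A) : σ.push f (-δ) = -σ.push f δ :=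
  map_neg _ _

lemma push_sub {C A A' : B} (f : A ⟶ A') (δ δ' : σ.Ext C A) :
    σ.push f (δ - δ') = σ.push f δ - σ.push f δ' :=
  map_sub _ _ _

lemma pull_sub {C' C A : B} (c : C' ⟶ C) (δ δ' : σ.Ext C A) :
    σ.pull c (δ - δ') = σ.pull c δ - σ.pull c δ' :=
  map_sub _ _ _

lemma push_sub_hom {C A A' : B} (f g : A ⟶ A') (δ : σ.Ext C A) :
    σ.push (f - g) δ = σ.push f δ - σ.push g δ := by
  have := σ.additive_fst (op C)
  simp [PreExtStruct.push]

@[simp] lemma push_zero_hom {C A A' : B} (δ : σ.Ext C A) : σ.push (0 : A ⟶ A') δ = 0 := by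
  simpa using σ.push_sub_hom (0 : A ⟶ A') 0 δ

lemma push_neg_hom {C A A' : B} (f : A ⟶ A') (δ : σ.Ext C A) :
    σ.push (-f) δ = -σ.push f δ := by
  simpa using σ.push_sub_hom 0 f δ

lemma pull_sub_hom {C' C A : B} (f g : C' ⟶ C) (δ : σ.Ext C A) :
    σ.pull (f - g) δ = σ.pull f δ - σ.pull g δ := by
  have := σ.additive_snd A
  exact ConcreteCategory.congr_hom ((σ.E.flip.obj A).map_sub (f := f.op) (g := g.op)) δ

@[simp] lemma pull_zero_hom {C' C A : B} (δ : σ.Ext C A) : σ.pull (0 : C' ⟶ C) δ = 0 := by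
  simpa using σ.pull_sub_hom (0 : C' ⟶ C) 0 δ

lemma pull_neg_hom {C' C A : B} (f : C' ⟶ C) (δ : σ.Ext C A) :
    σ.pull (-f) δ = -σ.pull f δ := by
  simpa using σ.pull_sub_hom 0 f δ

end Functoriality

section Conflations

variable {A X C : B} {δ : σ.Ext C A} {x : A ⟶ X} {y : X ⟶ C}

variable (σ) in
lemma realize_zero_from_zero (Y : B) (f : (0 : B) ⟶ Y) :
    σ.realize (0 : σ.Ext Y 0) f (𝟙 Y) := by
  have h := σ.realize_iso _ _ _ (isoZeroBiprod (isZero_zero B)).symm (σ.realize_zero 0 Y)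
  rwa [(isZero_zero B).eq_of_src (biprod.inl ≫ _) f, Iso.symm_inv, isoZeroBiprod_hom,
    biprod.inr_snd] at h

variable (σ) in
lemma realize_zero_to_zero (Y : B) (g : Y ⟶ (0 : B)) :
    σ.realize (0 : σ.Ext 0 Y) (𝟙 Y) g := by
  have h := σ.realize_iso _ _ _ (isoBiprodZero (isZero_zero B)).symm (σ.realize_zero Y 0)
  rwa [Iso.symm_hom, isoBiprodZero_inv, biprod.inl_fst,
    (isZero_zero B).eq_of_tgt (_ ≫ biprod.snd) g] at h

variable (σ) in
lemma realize_inr_fst (A C : B) :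
    σ.realize (0 : σ.Ext C A) (biprod.inr : A ⟶ C ⊞ A) biprod.fst := by
  have h := σ.realize_iso _ _ _ (biprod.braiding A C) (σ.realize_zero A C)
  have e : (biprod.inl : A ⟶ A ⊞ C) ≫ biprod.lift biprod.snd biprod.fst = biprod.inr := by
    ext <;> simp
  rwa [biprod.braiding_hom, biprod.braiding_inv, e, biprod.lift_snd] at h

lemma comp_eq_zero_of_realize (h : σ.realize δ x y) : x ≫ y = 0 := by
  obtain ⟨a, -, ha⟩ := σ.et3op _ _ _ _ _ _ h (σ.realize_zero A C) (biprod.lift 0 y) (𝟙 C)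
    (by simp)
  simpa using congrArg (· ≫ biprod.snd) ha

lemma push_infl_eq_zero (h : σ.realize δ x y) : σ.push x δ = 0 := by
  obtain ⟨c, hc, -⟩ := σ.et3 _ _ _ _ _ _ h (σ.realize_zero X C) x biprod.inl rfl
  rw [hc, pull_zero]

lemma pull_defl_eq_zero (h : σ.realize δ x y) : σ.pull y δ = 0 := by
  obtain ⟨a, ha, -⟩ := σ.et3op _ _ _ _ _ _ (σ.realize_zero A X) h biprod.snd y rfl
  rw [← ha, push_zero]

lemma exists_extend_of_push_eq_zero (h : σ.realize δ x y) {Y : B} (f : A ⟶ Y)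
    (hf : σ.push f δ = 0) : ∃ g : X ⟶ Y, x ≫ g = f := by
  obtain ⟨b, hb, -⟩ := σ.realize_map _ _ _ _ _ _ f (𝟙 C) h (σ.realize_zero Y C)
    (by rw [hf, pull_zero])
  exact ⟨b ≫ biprod.fst, by rw [reassoc_of% hb]; simp⟩

lemma exists_lift_of_pull_eq_zero (h : σ.realize δ x y) {Y : B} (c : Y ⟶ C)
    (hc : σ.pull c δ = 0) : ∃ g : Y ⟶ X, g ≫ y = c := by
  obtain ⟨b, -, hb⟩ := σ.realize_map _ _ _ _ _ _ (𝟙 A) c (σ.realize_zero A Y) h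
    (by rw [push_zero, hc])
  exact ⟨biprod.inr ≫ b, by rw [Category.assoc, ← hb]; simp⟩

lemma exists_desc_of_comp_eq_zero (h : σ.realize δ x y) {Y : B} (g : X ⟶ Y)
    (hg : x ≫ g = 0) : ∃ t : C ⟶ Y, y ≫ t = g := by
  obtain ⟨c, -, hc⟩ := σ.et3 _ _ _ _ _ _ h (σ.realize_zero_from_zero Y 0)
    (0 : A ⟶ 0) g (by rw [hg, zero_comp])
  exact ⟨c, by simpa using hc⟩

lemma exists_lift_of_comp_eq_zero (h : σ.realize δ x y) {Y : B} (g : Y ⟶ X)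
    (hg : g ≫ y = 0) : ∃ a : Y ⟶ A, a ≫ x = g := by
  obtain ⟨a, -, ha⟩ := σ.et3op _ _ _ _ _ _ (σ.realize_zero_to_zero Y 0) h
    g (0 : 0 ⟶ C) (by rw [hg, zero_comp])
  exact ⟨a, by simpa using ha.symm⟩

lemma exists_iso_biprod_of_realize_zero (h : σ.realize (0 : σ.Ext C A) x y) :
    ∃ b : X ≅ A ⊞ C, x ≫ b.hom = biprod.inl ∧ b.hom ≫ biprod.snd = y :=
  σ.realize_unique _ _ _ _ _ h (σ.realize_zero A C)

lemma exists_retraction_of_realize_zero (h : σ.realize (0 : σ.Ext C A) x y) :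
    ∃ r : X ⟶ A, x ≫ r = 𝟙 A := by
  obtain ⟨b, hb, -⟩ := exists_iso_biprod_of_realize_zero h
  exact ⟨b.hom ≫ biprod.fst, by rw [reassoc_of% hb]; simp⟩

lemma exists_section_of_realize_zero (h : σ.realize (0 : σ.Ext C A) x y) :
    ∃ s : C ⟶ X, s ≫ y = 𝟙 C := by
  obtain ⟨b, -, hb⟩ := exists_iso_biprod_of_realize_zero h
  exact ⟨biprod.inr ≫ b.inv, by rw [← hb]; simp⟩

lemma exists_push_eq_of_pull_defl_eq_zero (h : σ.realize δ x y) {Y : B} (θ : σ.Ext C Y)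
    (hθ : σ.pull y θ = 0) : ∃ l : A ⟶ Y, σ.push l δ = θ := by
  obtain ⟨Xθ, xθ, yθ, hre⟩ := σ.realize_ex θ
  obtain ⟨g, hg⟩ := exists_lift_of_pull_eq_zero hre y hθ
  obtain ⟨a, ha, -⟩ := σ.et3op _ _ _ _ _ _ h hre g (𝟙 C) (by rw [Category.comp_id, hg])
  exact ⟨a, by simpa using ha⟩

lemma exists_pull_eq_of_push_infl_eq_zero (h : σ.realize δ x y) {Y : B} (χ : σ.Ext Y A)
    (hχ : σ.push x χ = 0) : ∃ u : Y ⟶ C, σ.pull u δ = χ := by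
  obtain ⟨Xχ, xχ, yχ, hre⟩ := σ.realize_ex χ
  obtain ⟨g, hg⟩ := exists_extend_of_push_eq_zero hre x hχ
  obtain ⟨u, hu, -⟩ := σ.et3 _ _ _ _ _ _ hre h (𝟙 A) g (by rw [hg, Category.id_comp])
  exact ⟨u, by simpa using hu.symm⟩

lemma exists_pull_defl_eq_of_pull_infl_eq_zero (h : σ.realize δ x y) {Y : B}
    (ρ : σ.Ext X Y) (hρ : σ.pull x ρ = 0) : ∃ τ : σ.Ext C Y, σ.pull y τ = ρ := by
  obtain ⟨Xρ, xρ, yρ, hre⟩ := σ.realize_ex ρ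
  obtain ⟨E₀, _, _, _, δ'', -, -, -, hsplit, -, hδ''⟩ := σ.et4op ρ xρ yρ δ x y hre h
  rw [hρ] at hsplit
  obtain ⟨r, hr⟩ := exists_retraction_of_realize_zero hsplit
  exact ⟨σ.push r δ'', by rw [← push_pull, hδ'', push_push, hr, push_id]⟩

lemma exists_push_infl_eq_of_push_defl_eq_zero (h : σ.realize δ x y) {Y : B}
    (χ : σ.Ext Y X) (hχ : σ.push y χ = 0) : ∃ τ : σ.Ext Y A, σ.push x τ = χ := by
  obtain ⟨Xχ, xχ, yχ, hre⟩ := σ.realize_ex χ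
  obtain ⟨E₀, _, _, _, δ'', -, -, -, hsplit, -, hδ''⟩ := σ.et4 δ x y χ xχ yχ h hre
  rw [hχ] at hsplit
  obtain ⟨s, hs⟩ := exists_section_of_realize_zero hsplit
  exact ⟨σ.pull s δ'', by rw [push_pull, hδ'', pull_pull, hs, pull_id]⟩

lemma isIso_of_realize_of_comp_eq (h : σ.realize δ x y) (ψ : X ⟶ X) (h₁ : x ≫ ψ = x)
    (h₂ : ψ ≫ y = y) : IsIso ψ := by
  obtain ⟨a, ha⟩ := exists_lift_of_comp_eq_zero h (𝟙 X - ψ)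
    (by rw [Preadditive.sub_comp, h₂, Category.id_comp, sub_self])
  -- `ψ = 𝟙 - n` with `n = a ≫ x` square zero, so `𝟙 + n` is its inverse.
  have hψ : ψ = 𝟙 X - a ≫ x := by rw [ha]; abel
  have hn : (a ≫ x) ≫ (a ≫ x) = 0 := by
    rw [Category.assoc, ha, Preadditive.comp_sub, h₁, Category.comp_id, sub_self, comp_zero]
  refine ⟨𝟙 X + a ≫ x, ?_, ?_⟩ <;>
    simp only [hψ, Preadditive.sub_comp, Preadditive.comp_sub, Preadditive.add_comp,
      Preadditive.comp_add, Category.id_comp, Category.comp_id, hn] <;> abel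

lemma realize_push_iso {A' : B} (a : A' ≅ A) (h : σ.realize δ x y) :
    σ.realize (σ.push a.inv δ) (a.hom ≫ x) y := by
  obtain ⟨X₀, x₀, y₀, h₀⟩ := σ.realize_ex (σ.push a.inv δ)
  obtain ⟨b, hb₁, hb₂⟩ := σ.realize_map _ _ _ _ _ _ a.inv (𝟙 C) h h₀ (by rw [pull_id])
  obtain ⟨b', hb'₁, hb'₂⟩ := σ.realize_map _ _ _ _ _ _ a.hom (𝟙 C) h₀ h
    (by rw [push_push, Iso.inv_hom_id, push_id, pull_id])
  rw [Category.comp_id] at hb₂ hb'₂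
  have : IsIso (b' ≫ b) := isIso_of_realize_of_comp_eq h₀ _
    (by rw [reassoc_of% hb'₁, hb₁, Iso.hom_inv_id_assoc]) (by rw [Category.assoc, ← hb₂, hb'₂])
  have : IsIso (b ≫ b') := isIso_of_realize_of_comp_eq h _
    (by rw [reassoc_of% hb₁, hb'₁, Iso.inv_hom_id_assoc]) (by rw [Category.assoc, ← hb'₂, hb₂])
  have : IsIso b' := isIso_of_isIso_comp_of_isIso_comp b' b
  have h' := σ.realize_iso _ _ _ (asIso b') h₀
  rwa [asIso_hom, hb'₁, asIso_inv, hb'₂, IsIso.inv_hom_id_assoc] at h'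

lemma realize_pull_iso {C' : B} (c : C' ≅ C) (h : σ.realize δ x y) :
    σ.realize (σ.pull c.hom δ) x (y ≫ c.inv) := by
  obtain ⟨X₀, x₀, y₀, h₀⟩ := σ.realize_ex (σ.pull c.hom δ)
  obtain ⟨b, hb₁, hb₂⟩ := σ.realize_map _ _ _ _ _ _ (𝟙 A) c.hom h₀ h (by rw [push_id])
  obtain ⟨b', hb'₁, hb'₂⟩ := σ.realize_map _ _ _ _ _ _ (𝟙 A) c.inv h h₀
    (by rw [push_id, pull_pull, Iso.inv_hom_id, pull_id])
  rw [Category.id_comp] at hb₁ hb'₁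
  have : IsIso (b ≫ b') := isIso_of_realize_of_comp_eq h₀ _
    (by rw [reassoc_of% hb₁, hb'₁]) (by rw [Category.assoc, ← hb'₂, ← reassoc_of% hb₂]; simp)
  have : IsIso (b' ≫ b) := isIso_of_realize_of_comp_eq h _
    (by rw [reassoc_of% hb'₁, hb₁]) (by rw [Category.assoc, ← hb₂, ← reassoc_of% hb'₂]; simp)
  have : IsIso b := isIso_of_isIso_comp_of_isIso_comp b b'
  have h' := σ.realize_iso _ _ _ (asIso b) h₀
  have hy : inv b ≫ y₀ = y ≫ c.inv := by
    rw [IsIso.inv_comp_eq, ← reassoc_of% hb₂]; simp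
  rwa [asIso_hom, hb₁, asIso_inv, hy] at h'

lemma exists_cone_iso {C' : B} {δ' : σ.Ext C' A} {y' : X ⟶ C'} (h : σ.realize δ x y)
    (h' : σ.realize δ' x y') : ∃ c : C ≅ C', y ≫ c.hom = y' ∧ σ.pull c.hom δ' = δ := by
  obtain ⟨c, hc₁, hc₂⟩ := σ.et3 _ _ _ _ _ _ h h' (𝟙 A) (𝟙 X) (by simp)
  rw [push_id] at hc₁
  rw [Category.id_comp] at hc₂
  have surj : ∀ {Q : B} (u : Q ⟶ C'), ∃ v : Q ⟶ C, v ≫ c = u := fun {Q} u => by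
    obtain ⟨v₀, hv₀⟩ := exists_pull_eq_of_push_infl_eq_zero h (σ.pull u δ')
      (by rw [push_pull, push_infl_eq_zero h', pull_zero])
    obtain ⟨g, hg⟩ := exists_lift_of_pull_eq_zero h' (v₀ ≫ c - u)
      (by rw [pull_sub_hom, ← pull_pull, ← hc₁, hv₀, sub_self])
    exact ⟨v₀ - g ≫ y, by rw [Preadditive.sub_comp, Category.assoc, hc₂, hg]; abel⟩
  have inj : ∀ {Q : B} (u : Q ⟶ C), u ≫ c = 0 → u = 0 := fun {Q} u hu => by
    obtain ⟨g, hg⟩ := exists_lift_of_pull_eq_zero h u (by rw [hc₁, pull_pull, hu, pull_zero_hom])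
    obtain ⟨a, ha⟩ := exists_lift_of_comp_eq_zero h' g (by rw [← hc₂, reassoc_of% hg, hu])
    rw [← hg, ← ha, Category.assoc, comp_eq_zero_of_realize h, comp_zero]
  obtain ⟨v, hv⟩ := surj (𝟙 C')
  have hcv : c ≫ v = 𝟙 C := sub_eq_zero.1 (inj _ (by simp [hv]))
  exact ⟨⟨c, v, hcv, hv⟩, hc₂, hc₁.symm⟩

lemma exists_cocone_iso {A' : B} {δ' : σ.Ext C A'} {x' : A' ⟶ X} (h : σ.realize δ x y)
    (h' : σ.realize δ' x' y) : ∃ a : A ≅ A', a.hom ≫ x' = x ∧ σ.push a.hom δ = δ' := by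
  obtain ⟨a, ha₁, ha₂⟩ := σ.et3op _ _ _ _ _ _ h h' (𝟙 X) (𝟙 C) (by simp)
  rw [pull_id] at ha₁
  rw [Category.comp_id] at ha₂
  have surj : ∀ {Q : B} (u : A ⟶ Q), ∃ v : A' ⟶ Q, a ≫ v = u := fun {Q} u => by
    obtain ⟨l, hl⟩ := exists_push_eq_of_pull_defl_eq_zero h' (σ.push u δ)
      (by rw [← push_pull, pull_defl_eq_zero h, push_zero])
    obtain ⟨g, hg⟩ := exists_extend_of_push_eq_zero h (a ≫ l - u)
      (by rw [push_sub_hom, ← push_push, ha₁, hl, sub_self])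
    exact ⟨l - x' ≫ g, by rw [Preadditive.comp_sub, ← Category.assoc, ← ha₂, hg]; abel⟩
  have inj : ∀ {Q : B} (u : A' ⟶ Q), a ≫ u = 0 → u = 0 := fun {Q} u hu => by
    obtain ⟨g, hg⟩ := exists_extend_of_push_eq_zero h' u
      (by rw [← ha₁, push_push, hu, push_zero_hom])
    obtain ⟨t, ht⟩ := exists_desc_of_comp_eq_zero h g (by rw [ha₂, Category.assoc, hg, hu])
    rw [← hg, ← ht, ← Category.assoc, comp_eq_zero_of_realize h', zero_comp]
  obtain ⟨v, hv⟩ := surj (𝟙 A)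
  have hva : v ≫ a = 𝟙 A' := sub_eq_zero.1 (inj _ (by simp [reassoc_of% hv]))
  exact ⟨⟨a, v, hv, hva⟩, ha₂.symm, ha₁⟩

lemma realize_biprod_left (h : σ.realize δ x y) (P : B) :
    σ.realize (σ.push biprod.inr δ) (biprod.map (𝟙 P) x) (biprod.snd ≫ y) := by
  have h' := realize_pull_iso (isoZeroBiprod (isZero_zero B))
    (σ.realize_sum _ _ _ _ _ _ (σ.realize_zero_to_zero P 0) h)
  have e : σ.pull biprod.inr (σ.sumExt (0 : σ.Ext 0 P) δ) = σ.push biprod.inr δ := by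
    simp only [PreExtStruct.sumExt, pull_zero, push_zero, zero_add, ← push_pull, pull_pull,
      biprod.inr_snd, pull_id]
  rwa [isoZeroBiprod_hom, isoZeroBiprod_inv, e, biprod.map_snd] at h'

lemma realize_biprod_right (h : σ.realize δ x y) (Q : B) :
    σ.realize (σ.pull biprod.fst δ) (x ≫ biprod.inl) (biprod.map y (𝟙 Q)) := by
  have h' := realize_push_iso (isoBiprodZero (isZero_zero B))
    (σ.realize_sum _ _ _ _ _ _ h (σ.realize_zero_from_zero Q 0))
  have e : σ.push biprod.fst (σ.sumExt δ (0 : σ.Ext Q 0)) = σ.pull biprod.fst δ := by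
    simp only [PreExtStruct.sumExt, pull_zero, push_zero, add_zero, push_pull, push_push,
      biprod.inl_fst, push_id]
  rwa [isoBiprodZero_hom, isoBiprodZero_inv, e, biprod.inl_map] at h'

/-- The second conflation exhibits `P` as a homotopy pushout of `x` along `f`. -/
lemma exists_pushout (h : σ.realize δ x y) {A' : B} (f : A ⟶ A') :
    ∃ (P : B) (m : A' ⟶ P) (e : P ⟶ C) (n : X ⟶ P) (μ : σ.Ext P A),
      σ.realize (-σ.push f δ) m e ∧ σ.realize μ (biprod.lift f x) (biprod.desc m n) := by
  have h₁ := realize_push_iso (biprodShear f) (realize_biprod_left h A')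
  have e₁ : (biprodShear f).hom ≫ biprod.map (𝟙 A') x =
      biprod.desc biprod.inl (biprod.lift f x) := by
    ext <;> simp
  rw [push_push, e₁] at h₁
  obtain ⟨P, m, e, n, μ, hn, -, hμ, hm, -, -⟩ := σ.et4 _ _ _ _ _ _ (σ.realize_inr_fst A A') h₁
  have hn : n = biprod.desc m (biprod.inr ≫ n) := by
    ext
    · simpa using congrArg (biprod.inl ≫ ·) hn
    · simp
  have e₂ : σ.push biprod.fst (σ.push (biprod.inr ≫ (biprodShear f).inv) δ) = -σ.push f δ := by
    simp [push_push, push_neg_hom]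
  rw [e₂] at hm
  rw [biprod.inr_desc, hn] at hμ
  exact ⟨P, m, e, biprod.inr ≫ n, μ, hm, hμ⟩

lemma exists_pullback (h : σ.realize δ x y) {C' : B} (g : C' ⟶ C) :
    ∃ (Q : B) (m : A ⟶ Q) (e : Q ⟶ C') (n : Q ⟶ X) (μ : σ.Ext C Q),
      σ.realize (-σ.pull g δ) m e ∧ σ.realize μ (biprod.lift n e) (biprod.desc y g) := by
  have h₁ := realize_pull_iso (biprodShear g).symm (realize_biprod_right h C')
  have e₁ : biprod.map y (𝟙 C') ≫ (biprodShear g).hom =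
      biprod.lift (biprod.desc y g) biprod.snd := by
    ext <;> simp
  rw [pull_pull, Iso.symm_inv, e₁] at h₁
  obtain ⟨Q, m, e, n, μ, hn, -, hμ, hm, -, -⟩ := σ.et4op _ _ _ _ _ _ h₁ (σ.realize_inr_fst C' C)
  have hn : n = biprod.lift (n ≫ biprod.fst) e := by
    ext
    · simp
    · simpa using congrArg (· ≫ biprod.snd) hn
  have e₂ : σ.pull biprod.inr (σ.pull ((biprodShear g).symm.hom ≫ biprod.fst) δ) = -σ.pull g δ := by
    simp [pull_pull, pull_neg_hom]
  rw [e₂] at hm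
  rw [biprod.lift_fst, hn] at hμ
  exact ⟨Q, m, e, n ≫ biprod.fst, μ, hm, hμ⟩

lemma exists_two_sided_pushout {X' C' : B} {δ' : σ.Ext C' A} {x' : A ⟶ X'} {y' : X' ⟶ C'}
    (h : σ.realize δ x y) (h' : σ.realize δ' x' y') :
    ∃ (P : B) (m : X ⟶ P) (e : P ⟶ C') (m' : X' ⟶ P) (e' : P ⟶ C),
      σ.realize (-σ.push x δ') m e ∧ σ.realize (-σ.push x' δ) m' e' := by
  obtain ⟨P, m, e, n, μ, hme, hμ⟩ := exists_pushout h' x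
  obtain ⟨P₂, m₂, e₂, n₂, μ₂, hme₂, hμ₂⟩ := exists_pushout h x'
  have hμ₂' := σ.realize_iso _ _ _ (biprod.braiding X' X) hμ₂
  have hl : biprod.lift x' x ≫ (biprod.braiding X' X).hom = biprod.lift x x' := by ext <;> simp
  have hd : (biprod.braiding X' X).inv ≫ biprod.desc m₂ n₂ = biprod.desc n₂ m₂ := by
    ext <;> simp
  rw [hl, hd] at hμ₂'
  obtain ⟨c, hc, -⟩ := exists_cone_iso hμ hμ₂'
  have hn : m₂ ≫ c.inv = n := by
    rw [Iso.comp_inv_eq]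
    simpa using (congrArg (biprod.inr ≫ ·) hc).symm
  have hme₂' := σ.realize_iso _ _ _ c.symm hme₂
  rw [Iso.symm_hom, hn] at hme₂'
  exact ⟨P, m, e, n, _, hme, hme₂'⟩

lemma exists_two_sided_pullback {A' X' : B} {δ' : σ.Ext C A'} {x' : A' ⟶ X'} {y' : X' ⟶ C}
    (h : σ.realize δ x y) (h' : σ.realize δ' x' y') :
    ∃ (Q : B) (m : A ⟶ Q) (e : Q ⟶ X') (m' : A' ⟶ Q) (e' : Q ⟶ X),
      σ.realize (-σ.pull y' δ) m e ∧ σ.realize (-σ.pull y δ') m' e' := by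
  obtain ⟨Q, m, e, n, μ, hme, hμ⟩ := exists_pullback h y'
  obtain ⟨Q₂, m₂, e₂, n₂, μ₂, hme₂, hμ₂⟩ := exists_pullback h' y
  have hμ₂' := σ.realize_iso _ _ _ (biprod.braiding X' X) hμ₂
  have hl : biprod.lift n₂ e₂ ≫ (biprod.braiding X' X).hom = biprod.lift e₂ n₂ := by ext <;> simp
  have hd : (biprod.braiding X' X).inv ≫ biprod.desc y' y = biprod.desc y y' := by
    ext <;> simp
  rw [hl, hd] at hμ₂'
  obtain ⟨a, ha, -⟩ := exists_cocone_iso hμ hμ₂'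
  have hn : a.hom ≫ e₂ = n := by simpa using congrArg (· ≫ biprod.fst) ha
  have hme₂' := σ.realize_iso _ _ _ a.symm hme₂
  rw [Iso.symm_inv, hn] at hme₂'
  exact ⟨Q, m, e, _, n, hme, hme₂'⟩

end Conflations

section ExtensionLifting

lemma exists_push_eq_of_pull_eq {V₀ W Y X C : B} {ρ : σ.Ext Y V₀} {v : V₀ ⟶ W} {w : W ⟶ Y}
    (hρ : σ.realize ρ v w) {χ : σ.Ext C Y} {m : Y ⟶ X} {e : X ⟶ C} (hχ : σ.realize χ m e)
    {η : σ.Ext X V₀} (hη : σ.pull m η = ρ) : ∃ χ' : σ.Ext C W, σ.push w χ' = χ := by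
  obtain ⟨G, a, b, hηr⟩ := σ.realize_ex η
  obtain ⟨E, _, d, _, ε, -, -, -, hE, hεχ, -⟩ := σ.et4op η a b χ m e hηr hχ
  rw [hη] at hE
  obtain ⟨κ, -, hκ⟩ := σ.realize_unique _ _ _ _ _ hE hρ
  exact ⟨σ.push κ.hom ε, by rw [push_push, hκ, hεχ]⟩

lemma exists_pull_eq_of_push_eq {V₀ X Y Z C : B} {θ : σ.Ext Y V₀} {m : V₀ ⟶ X} {e : X ⟶ Y}
    (hθ : σ.realize θ m e) {δ : σ.Ext C Y} {z : Y ⟶ Z} {s : Z ⟶ C} (hδ : σ.realize δ z s)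
    {η : σ.Ext C X} (hη : σ.push e η = δ) : ∃ ξ : σ.Ext Z V₀, σ.pull z ξ = θ := by
  obtain ⟨G, a, b, hηr⟩ := σ.realize_ex η
  obtain ⟨E, d, _, _, ε, -, -, -, hE, hεθ, -⟩ := σ.et4 θ m e η a b hθ hηr
  rw [hη] at hE
  obtain ⟨κ, hκ, -⟩ := σ.realize_unique _ _ _ _ _ hE hδ
  refine ⟨σ.pull κ.inv ε, ?_⟩
  rw [pull_pull, ← hκ, Category.assoc, Iso.hom_inv_id, Category.comp_id, hεθ]

end ExtensionLifting

section ConesAndCocones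

variable {D₁ D₂ : Set B}

lemma mem_coCone_of_iso {X X' : B} (i : X' ≅ X) (hX : X ∈ σ.CoCone D₁ D₂) :
    X' ∈ σ.CoCone D₁ D₂ := by
  obtain ⟨Y, C, f, g, hY, hC, δ, hδ⟩ := hX
  exact ⟨Y, C, i.hom ≫ f, g, hY, hC, _, realize_push_iso i hδ⟩

lemma mem_cone_of_iso {X X' : B} (i : X' ≅ X) (hX : X ∈ σ.Cone D₁ D₂) :
    X' ∈ σ.Cone D₁ D₂ := by
  obtain ⟨A, Y, f, g, hA, hY, δ, hδ⟩ := hX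
  exact ⟨A, Y, f, g ≫ i.inv, hA, hY, _, realize_pull_iso i hδ⟩

lemma biprod_mem_coCone (h₁ : AddClosed D₁) (h₂ : AddClosed D₂) {X X' : B}
    (hX : X ∈ σ.CoCone D₁ D₂) (hX' : X' ∈ σ.CoCone D₁ D₂) : (X ⊞ X') ∈ σ.CoCone D₁ D₂ := by
  obtain ⟨Y, C, f, g, hY, hC, δ, hδ⟩ := hX
  obtain ⟨Y', C', f', g', hY', hC', δ', hδ'⟩ := hX'
  exact ⟨Y ⊞ Y', C ⊞ C', biprod.map f f', biprod.map g g', h₁.biprod_mem _ _ hY hY',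
    h₂.biprod_mem _ _ hC hC', _, σ.realize_sum _ _ _ _ _ _ hδ hδ'⟩

lemma biprod_mem_cone (h₁ : AddClosed D₁) (h₂ : AddClosed D₂) {X X' : B}
    (hX : X ∈ σ.Cone D₁ D₂) (hX' : X' ∈ σ.Cone D₁ D₂) : (X ⊞ X') ∈ σ.Cone D₁ D₂ := by
  obtain ⟨A, Y, f, g, hA, hY, δ, hδ⟩ := hX
  obtain ⟨A', Y', f', g', hA', hY', δ', hδ'⟩ := hX'
  exact ⟨A ⊞ A', Y ⊞ Y', biprod.map f f', biprod.map g g', h₁.biprod_mem _ _ hA hA',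
    h₂.biprod_mem _ _ hY hY', _, σ.realize_sum _ _ _ _ _ _ hδ hδ'⟩

lemma mem_coCone_of_mem (h₂ : AddClosed D₂) {X : B} (hX : X ∈ D₁) : X ∈ σ.CoCone D₁ D₂ :=
  ⟨X, 0, 𝟙 X, 0, hX, h₂.zero_mem _ (isZero_zero B), 0, σ.realize_zero_to_zero X 0⟩

lemma mem_cone_of_mem (h₁ : AddClosed D₁) {X : B} (hX : X ∈ D₂) : X ∈ σ.Cone D₁ D₂ :=
  ⟨0, X, 0, 𝟙 X, h₁.zero_mem _ (isZero_zero B), hX, 0, σ.realize_zero_from_zero X 0⟩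

end ConesAndCocones

namespace IsCotorsionPair

variable {U V : Set B} (hUV : σ.IsCotorsionPair U V)
include hUV

lemma mem_right_of_vanish {X : B} (h : ∀ ⦃U' : B⦄, U' ∈ U → ∀ δ : σ.Ext U' X, δ = 0) :
    X ∈ V := by
  obtain ⟨V₀, U₀, f, g, hV₀, hU₀, δ, hδ⟩ := hUV.coresolve X
  rw [h hU₀ δ] at hδ
  obtain ⟨r, hr⟩ := exists_retraction_of_realize_zero hδ
  exact hUV.addV.summand_mem X V₀ hV₀ f r hr

lemma mem_left_of_vanish {X : B} (h : ∀ ⦃V' : B⦄, V' ∈ V → ∀ δ : σ.Ext X V', δ = 0) :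
    X ∈ U := by
  obtain ⟨V₀, U₀, f, g, hV₀, hU₀, δ, hδ⟩ := hUV.resolve X
  rw [h hV₀ δ] at hδ
  obtain ⟨s, hs⟩ := exists_section_of_realize_zero hδ
  exact hUV.addU.summand_mem X U₀ hU₀ s g hs

variable {A X C : B} {δ : σ.Ext C A} {x : A ⟶ X} {y : X ⟶ C}

lemma mem_right_of_realize (h : σ.realize δ x y) (hA : A ∈ V) (hC : C ∈ V) : X ∈ V :=
  hUV.mem_right_of_vanish fun _ hU' χ => by
    obtain ⟨τ, rfl⟩ := exists_push_infl_eq_of_push_defl_eq_zero h χ (hUV.ext_vanish hU' hC _)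
    rw [hUV.ext_vanish hU' hA τ, push_zero]

lemma mem_left_of_realize (h : σ.realize δ x y) (hA : A ∈ U) (hC : C ∈ U) : X ∈ U :=
  hUV.mem_left_of_vanish fun _ hV' χ => by
    obtain ⟨τ, rfl⟩ := exists_pull_defl_eq_of_pull_infl_eq_zero h χ (hUV.ext_vanish hA hV' _)
    rw [hUV.ext_vanish hC hV' τ, pull_zero]

end IsCotorsionPair

namespace IsTwinCotorsionPair

variable {S T U V : Set B} (twin : σ.IsTwinCotorsionPair S T U V)
include twin

lemma V_subset_T : V ⊆ T := fun _ hV' =>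
  twin.fst.mem_right_of_vanish fun _ hS' δ => twin.ext_SV hS' hV' δ

lemma S_subset_U : S ⊆ U := fun _ hS' =>
  twin.snd.mem_left_of_vanish fun _ hV' δ => twin.ext_SV hS' hV' δ

lemma addClosed_core : AddClosed (T ∩ U) where
  zero_mem Z hZ := ⟨twin.fst.addV.zero_mem Z hZ, twin.snd.addU.zero_mem Z hZ⟩
  biprod_mem X Y hX hY :=
    ⟨twin.fst.addV.biprod_mem X Y hX.1 hY.1, twin.snd.addU.biprod_mem X Y hX.2 hY.2⟩
  summand_mem X Y hY s r hsr :=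
    ⟨twin.fst.addV.summand_mem X Y hY.1 s r hsr, twin.snd.addU.summand_mem X Y hY.2 s r hsr⟩

lemma S_subset_tNeg : S ⊆ σ.tNeg S T U := fun S' hS' => by
  obtain ⟨T₀, S₁, f, g, hT₀, hS₁, δ, hδ⟩ := twin.fst.coresolve S'
  exact ⟨T₀, S₁, f, g, ⟨hT₀, twin.snd.mem_left_of_realize hδ (twin.S_subset_U hS')
    (twin.S_subset_U hS₁)⟩, hS₁, δ, hδ⟩

lemma V_subset_tPos : V ⊆ σ.tPos T U V := fun V' hV' => by
  obtain ⟨V₀, U₀, f, g, hV₀, hU₀, δ, hδ⟩ := twin.snd.resolve V'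
  exact ⟨V₀, U₀, f, g, hV₀, ⟨twin.fst.mem_right_of_realize hδ (twin.V_subset_T hV₀)
    (twin.V_subset_T hV'), hU₀⟩, δ, hδ⟩

variable {A X C : B} {δ : σ.Ext C A} {x : A ⟶ X} {y : X ⟶ C}

lemma mem_tNeg_left_of_realize (h : σ.realize δ x y) (hX : X ∈ σ.tNeg S T U) (hC : C ∈ S) :
    A ∈ σ.tNeg S T U := by
  obtain ⟨W, S', w, s, hW, hS', ε, hε⟩ := hX
  obtain ⟨E, _, _, h', _, -, -, hE, hE', -, -⟩ := σ.et4 _ _ _ _ _ _ h hε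
  exact ⟨W, E, x ≫ w, h', hW, twin.fst.mem_left_of_realize hE' hC hS', _, hE⟩

lemma mem_tPos_right_of_realize (h : σ.realize δ x y) (hA : A ∈ V) (hX : X ∈ σ.tPos T U V) :
    C ∈ σ.tPos T U V := by
  obtain ⟨V', W, v, w, hV', hW, ε, hε⟩ := hX
  obtain ⟨E, _, _, m, _, -, -, hE, hE', -, -⟩ := σ.et4op _ _ _ _ _ _ hε h
  exact ⟨E, W, m, w ≫ y, twin.snd.mem_right_of_realize hE' hV' hA, hW, _, hE⟩

lemma mem_tNeg_mid_of_realize (h : σ.realize δ x y) (hA : A ∈ σ.tNeg S T U) (hC : C ∈ S) :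
    X ∈ σ.tNeg S T U := by
  obtain ⟨W, S', w, s, hW, hS', ε, hε⟩ := hA
  obtain ⟨P, _, _, _, _, hP, hsplit⟩ := exists_two_sided_pushout h hε
  rw [twin.fst.ext_vanish hC hW.1 (σ.push w δ), neg_zero] at hsplit
  obtain ⟨b, -, -⟩ := exists_iso_biprod_of_realize_zero hsplit
  refine twin.mem_tNeg_left_of_realize hP (mem_coCone_of_iso b ?_) hS'
  exact biprod_mem_coCone twin.addClosed_core twin.fst.addU
    (mem_coCone_of_mem twin.fst.addU hW) (twin.S_subset_tNeg hC)

lemma mem_tPos_mid_of_realize (h : σ.realize δ x y) (hA : A ∈ V) (hC : C ∈ σ.tPos T U V) :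
    X ∈ σ.tPos T U V := by
  obtain ⟨V', W, v, w, hV', hW, ε, hε⟩ := hC
  obtain ⟨Q, _, _, _, _, hsplit, hQ⟩ := exists_two_sided_pullback h hε
  rw [twin.snd.ext_vanish hW.2 hA (σ.pull w δ), neg_zero] at hsplit
  obtain ⟨b, -, -⟩ := exists_iso_biprod_of_realize_zero hsplit
  refine twin.mem_tPos_right_of_realize hQ hV' (mem_cone_of_iso b ?_)
  exact biprod_mem_cone twin.snd.addV twin.addClosed_core (twin.V_subset_tPos hA)
    (mem_cone_of_mem twin.snd.addV hW)

lemma exists_isReflectionSeq (M : B) :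
    ∃ (Z S₀ : B) (z : M ⟶ Z) (s : Z ⟶ S₀), σ.IsReflectionSeq S T U V z s := by
  obtain ⟨V', N, a, b, hV', hN, ν, hν⟩ := twin.snd.resolve M
  obtain ⟨W, S₀, t, s, hWT, hS₀, ε, hε⟩ := twin.fst.coresolve N
  have hWU : W ∈ U := twin.snd.mem_left_of_realize hε hN (twin.S_subset_U hS₀)
  obtain ⟨Z, d, e, h, ε', -, -, hZ, hd, hε'ν, -⟩ := σ.et4 ν a b ε t s hν hε
  refine ⟨Z, S₀, d, e, ⟨V', W, a ≫ t, h, hV', ⟨hWT, hWU⟩, ε', hZ⟩, hS₀, ⟨_, hd⟩, ?_⟩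
  intro V₀ hV₀ θ
  obtain ⟨l, rfl⟩ := exists_push_eq_of_pull_defl_eq_zero hν θ (twin.snd.ext_vanish hN hV₀ _)
  exact ⟨σ.push l ε', by dsimp only; rw [← push_pull, hε'ν]⟩

lemma exists_isCoreflectionSeq (K : B) :
    ∃ (V₀ Z : B) (v : V₀ ⟶ Z) (d : Z ⟶ K), σ.IsCoreflectionSeq S T U V v d := by
  obtain ⟨T', S', t, s, hT', hS', ε, hε⟩ := twin.fst.coresolve K
  obtain ⟨V₀, W, v, u, hV₀, hWU, ν, hν⟩ := twin.snd.resolve T'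
  have hWT : W ∈ T := twin.fst.mem_right_of_realize hν (twin.V_subset_T hV₀) hT'
  obtain ⟨Z, e, d, m, ε', -, -, hZ, hd, hε'ν, -⟩ := σ.et4op ν v u ε t s hν hε
  refine ⟨V₀, Z, e, d, ⟨W, S', m, u ≫ s, ⟨hWT, hWU⟩, hS', ε', hZ⟩, hV₀, ⟨_, hd⟩, ?_⟩
  intro S₀ hS₀ χ
  obtain ⟨l, rfl⟩ := exists_pull_eq_of_push_infl_eq_zero hε χ (twin.fst.ext_vanish hS₀ hT' _)
  exact ⟨σ.pull l ε', by dsimp only; rw [push_pull, hε'ν]⟩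

end IsTwinCotorsionPair

section Reflections

variable {S T U V : Set B} (twin : σ.IsTwinCotorsionPair S T U V)
include twin

lemma IsReflectionSeq.exists_comp_eq {M Z S₀ : B} {z : M ⟶ Z} {s : Z ⟶ S₀}
    (hz : σ.IsReflectionSeq S T U V z s) {Y : B} (hY : Y ∈ σ.tPos T U V) (g : M ⟶ Y) :
    ∃ φ : Z ⟶ Y, z ≫ φ = g := by
  obtain ⟨-, hS₀, ⟨δ, hδ⟩, hsurj⟩ := hz
  obtain ⟨V', W, v, w, hV', hW, ρ, hρ⟩ := hY
  obtain ⟨X, m, e, n, μ, hme, hμ⟩ := exists_pushout hδ g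
  obtain ⟨ξ, hξ⟩ := hsurj hV' (σ.pull g ρ)
  obtain ⟨η, hη⟩ := exists_pull_defl_eq_of_pull_infl_eq_zero hμ
    (σ.pull biprod.fst ρ - σ.pull biprod.snd ξ) (by simp [pull_sub, pull_pull, hξ])
  have hmη : σ.pull m η = ρ := by
    rw [← biprod.inl_desc m n, ← pull_pull, hη]
    simp [pull_sub, pull_pull]
  obtain ⟨χ, hχ⟩ := exists_push_eq_of_pull_eq hρ hme hmη
  rw [twin.fst.ext_vanish hS₀ hW.1 χ, push_zero, zero_eq_neg] at hχ
  exact exists_extend_of_push_eq_zero hδ g hχ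

lemma IsCoreflectionSeq.exists_comp_eq {V₀ Z K : B} {v : V₀ ⟶ Z} {d : Z ⟶ K}
    (hd : σ.IsCoreflectionSeq S T U V v d) {Y : B} (hY : Y ∈ σ.tNeg S T U) (t : Y ⟶ K) :
    ∃ ψ : Y ⟶ Z, ψ ≫ d = t := by
  obtain ⟨-, hV₀, ⟨ν, hν⟩, hsurj⟩ := hd
  obtain ⟨W, S', w, s, hW, hS', ε, hε⟩ := hY
  obtain ⟨Q, m, e, n, μ, hme, hμ⟩ := exists_pullback hν t
  obtain ⟨ξ, hξ⟩ := hsurj hS' (σ.push t ε)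
  obtain ⟨η, hη⟩ := exists_push_infl_eq_of_push_defl_eq_zero hμ
    (σ.push biprod.inl ξ - σ.push biprod.inr ε) (by simp [push_sub, push_push, hξ])
  have heη : σ.push e (-η) = ε := by
    rw [← biprod.lift_snd n e, ← push_push, push_neg, hη]
    simp [push_sub, push_push]
  obtain ⟨θ, hθ⟩ := exists_pull_eq_of_push_eq hme hε heη
  rw [twin.snd.ext_vanish hW.2 hV₀ θ, pull_zero, zero_eq_neg] at hθ
  exact exists_lift_of_pull_eq_zero hν t hθ

end Reflections

namespace IsTwinCotorsionPair

variable {S T U V : Set B} (twin : σ.IsTwinCotorsionPair S T U V)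
include twin

variable {A X C : B} {δ : σ.Ext C A} {x : A ⟶ X} {y : X ⟶ C}

lemma exists_extend_of_mem_wIdeal (h : σ.realize δ x y) (hC : C ∈ S) {Y : B} {f : A ⟶ Y}
    (hf : f ∈ wIdeal (T ∩ U) A Y) : ∃ g ∈ wIdeal (T ∩ U) X Y, x ≫ g = f := by
  obtain ⟨W, hW, p, q, rfl⟩ := (mem_wIdeal_iff_of_addClosed twin.addClosed_core f).1 hf
  obtain ⟨p', hp'⟩ := exists_extend_of_push_eq_zero h p (twin.fst.ext_vanish hC hW.1 _)
  exact ⟨p' ≫ q, comp_mem_wIdeal hW p' q, by rw [reassoc_of% hp']⟩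

lemma exists_lift_of_mem_wIdeal (h : σ.realize δ x y) (hA : A ∈ V) {Y : B} {f : Y ⟶ C}
    (hf : f ∈ wIdeal (T ∩ U) Y C) : ∃ g ∈ wIdeal (T ∩ U) Y X, g ≫ y = f := by
  obtain ⟨W, hW, p, q, rfl⟩ := (mem_wIdeal_iff_of_addClosed twin.addClosed_core f).1 hf
  obtain ⟨q', hq'⟩ := exists_lift_of_pull_eq_zero h q (twin.snd.ext_vanish hW.2 hA _)
  exact ⟨p ≫ q', comp_mem_wIdeal hW p q', by rw [Category.assoc, hq']⟩

lemma mem_wIdeal_of_mem_S_of_mem_tPos {Y : B} (hC : C ∈ S) (hY : Y ∈ σ.tPos T U V)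
    (t : C ⟶ Y) : t ∈ wIdeal (T ∩ U) C Y := by
  obtain ⟨V', W, v, w, hV', hW, ρ, hρ⟩ := hY
  obtain ⟨t', rfl⟩ := exists_lift_of_pull_eq_zero hρ t (twin.ext_SV hC hV' _)
  exact comp_mem_wIdeal hW t' w

lemma mem_wIdeal_of_mem_tNeg_of_mem_V {Y : B} (hY : Y ∈ σ.tNeg S T U) (hA : A ∈ V)
    (t : Y ⟶ A) : t ∈ wIdeal (T ∩ U) Y A := by
  obtain ⟨W, S', w, s, hW, hS', ε, hε⟩ := hY
  obtain ⟨t', rfl⟩ := exists_extend_of_push_eq_zero hε t (twin.ext_SV hS' hA _)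
  exact comp_mem_wIdeal hW w t'

lemma mem_wIdeal_of_infl_comp_mem (h : σ.realize δ x y) (hC : C ∈ S) {Y : B}
    (hY : Y ∈ σ.tPos T U V) {ψ : X ⟶ Y} (hψ : x ≫ ψ ∈ wIdeal (T ∩ U) A Y) :
    ψ ∈ wIdeal (T ∩ U) X Y := by
  obtain ⟨g, hg, hxg⟩ := twin.exists_extend_of_mem_wIdeal h hC hψ
  obtain ⟨t, ht⟩ := exists_desc_of_comp_eq_zero h (ψ - g)
    (by rw [Preadditive.comp_sub, hxg, sub_self])
  rw [← sub_add_cancel ψ g, ← ht]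
  exact add_mem (comp_left_mem_wIdeal _ y (twin.mem_wIdeal_of_mem_S_of_mem_tPos hC hY t)) hg

lemma mem_wIdeal_of_comp_defl_mem (h : σ.realize δ x y) (hA : A ∈ V) {Y : B}
    (hY : Y ∈ σ.tNeg S T U) {ψ : Y ⟶ X} (hψ : ψ ≫ y ∈ wIdeal (T ∩ U) Y C) :
    ψ ∈ wIdeal (T ∩ U) Y X := by
  obtain ⟨g, hg, hgy⟩ := twin.exists_lift_of_mem_wIdeal h hA hψ
  obtain ⟨t, ht⟩ := exists_lift_of_comp_eq_zero h (ψ - g)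
    (by rw [Preadditive.sub_comp, hgy, sub_self])
  rw [← sub_add_cancel ψ g, ← ht]
  exact add_mem (comp_right_mem_wIdeal _ x (twin.mem_wIdeal_of_mem_tNeg_of_mem_V hY hA t)) hg

lemma exists_isCokernelModulo {B₁ B₂ : B} (hB₁ : B₁ ∈ σ.tHeartSet S T U V)
    (hB₂ : B₂ ∈ σ.tHeartSet S T U V) (f : B₁ ⟶ B₂) :
    ∃ Z ∈ σ.tHeartSet S T U V, ∃ c : B₂ ⟶ Z,
      IsCokernelModulo (T ∩ U) (σ.tHeartSet S T U V) f c := by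
  obtain ⟨W, S₀, w, s, hW, hS₀, δ, hδ⟩ := hB₁.2
  obtain ⟨M, m, e, n, μ, hme, hμ⟩ := exists_pushout hδ f
  have hM : M ∈ σ.tNeg S T U := twin.mem_tNeg_mid_of_realize hme hB₂.2 hS₀
  obtain ⟨Z, S₁, z, s₁, hz⟩ := twin.exists_isReflectionSeq M
  obtain ⟨δ₁, hδ₁⟩ := hz.2.2.1
  have hfm : f ≫ m = w ≫ (-n) := by
    rw [Preadditive.comp_neg, eq_neg_iff_add_eq_zero]
    simpa using comp_eq_zero_of_realize hμ
  refine ⟨Z, ⟨hz.1, twin.mem_tNeg_mid_of_realize hδ₁ hM hz.2.1⟩, m ≫ z, ⟨?_, ?_, ?_⟩⟩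
  · rw [reassoc_of% hfm]
    exact comp_mem_wIdeal hW _ _
  · intro Y hY g hg
    obtain ⟨k, -, hk⟩ := twin.exists_extend_of_mem_wIdeal hδ hS₀ hg
    obtain ⟨g₁, hg₁⟩ := exists_desc_of_comp_eq_zero hμ (biprod.desc g (-k)) (by simp [hk])
    obtain ⟨φ, hφ⟩ := hz.exists_comp_eq twin hY.1 g₁
    refine ⟨φ, ?_⟩
    rw [Category.assoc, hφ, show m ≫ g₁ = g by simpa using congrArg (biprod.inl ≫ ·) hg₁,
      sub_self]
    exact zero_mem _
  · intro Y hY ψ hψ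
    rw [Category.assoc] at hψ
    exact twin.mem_wIdeal_of_infl_comp_mem hδ₁ hz.2.1 hY.1
      (twin.mem_wIdeal_of_infl_comp_mem hme hS₀ hY.1 hψ)

lemma exists_isKernelModulo {B₁ B₂ : B} (hB₁ : B₁ ∈ σ.tHeartSet S T U V)
    (hB₂ : B₂ ∈ σ.tHeartSet S T U V) (f : B₁ ⟶ B₂) :
    ∃ K ∈ σ.tHeartSet S T U V, ∃ k : K ⟶ B₁,
      IsKernelModulo (T ∩ U) (σ.tHeartSet S T U V) f k := by
  obtain ⟨V₀, W, v, w, hV₀, hW, ρ, hρ⟩ := hB₂.1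
  obtain ⟨M, m, e, n, μ, hme, hμ⟩ := exists_pullback hρ f
  have hM : M ∈ σ.tPos T U V := twin.mem_tPos_mid_of_realize hme hV₀ hB₁.1
  obtain ⟨V₁, K, v₁, d, hd⟩ := twin.exists_isCoreflectionSeq M
  obtain ⟨ν, hν⟩ := hd.2.2.1
  have hef : e ≫ f = (-n) ≫ w := by
    rw [Preadditive.neg_comp, eq_neg_iff_add_eq_zero, add_comm]
    simpa using comp_eq_zero_of_realize hμ
  refine ⟨K, ⟨twin.mem_tPos_mid_of_realize hν hd.2.1 hM, hd.1⟩, d ≫ e, ⟨?_, ?_, ?_⟩⟩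
  · rw [Category.assoc, hef, ← Category.assoc]
    exact comp_mem_wIdeal hW _ _
  · intro Y hY g hg
    obtain ⟨k, -, hk⟩ := twin.exists_lift_of_mem_wIdeal hρ hV₀ hg
    obtain ⟨g₁, hg₁⟩ := exists_lift_of_comp_eq_zero hμ (biprod.lift (-k) g) (by simp [hk])
    obtain ⟨ψ, hψ⟩ := hd.exists_comp_eq twin hY.2 g₁
    refine ⟨ψ, ?_⟩
    rw [← Category.assoc, hψ, show g₁ ≫ e = g by simpa using congrArg (· ≫ biprod.snd) hg₁,
      sub_self]
    exact zero_mem _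
  · intro Y hY ψ hψ
    rw [← Category.assoc] at hψ
    exact twin.mem_wIdeal_of_comp_defl_mem hν hd.2.1 hY.2
      (twin.mem_wIdeal_of_comp_defl_mem hme hV₀ hY.2 hψ)

end IsTwinCotorsionPair

end ExtStruct

/-- Proposition 2.21 / `C15`. The heart `H̄ = (B⁺ ∩ B⁻)/W` of a twin
cotorsion pair is preabelian: it is an additive category (it carries the canonical
preadditive structure of a subquotient of `B`) in which every morphism has a kernel
and a cokernel. -/
theorem statement_5 {B : Type u} [Category.{v} B] [Preadditive B] [HasFiniteBiproducts B]
    (σ : ExtStruct B) {S T U V : Set B} (twin : σ.IsTwinCotorsionPair S T U V) :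
    HasKernels (σ.THeart S T U V) ∧ HasCokernels (σ.THeart S T U V) :=
  ⟨hasKernels_quotSub _ _ fun _ _ hB₁ hB₂ f => twin.exists_isKernelModulo hB₁ hB₂ f,
    hasCokernels_quotSub _ _ fun _ _ hB₁ hB₂ f => twin.exists_isCokernelModulo hB₁ hB₂ f⟩

end ExtriHearts
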